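/- arXiv:1409.5772 — 2 statements merged into one kernel-verified Lean document; each statement's English description precedes it below -/
import Mathlib

section
/- Let k be a field and n a natural number. A triple (x,y,z) of natural numbers is the dimension type of an indecomposable system in S(n) if and only if the reversed triple (z,y,x) is the dimension type of an indecomposable system in S(n). -/
universe u

/-- A system in `S(n)`: a finite-dimensional `k`-vector space `V`, a `k`-linear
operator `T : V → V` with `T ^ n = 0`, and `T`-invariant subspaces `U₁ ⊆ U₂ ⊆ V`. -/
structure SystemS (k : Type u) [Field k] (n : ℕ) where
  V : Type u
  [acg : AddCommGroup V]
  [mod : Module k V]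
  [fd : FiniteDimensional k V]
  T : V →ₗ[k] V
  nilpotent : T ^ n = 0
  U₁ : Submodule k V
  U₂ : Submodule k V
  le12 : U₁ ≤ U₂
  inv1 : Submodule.map T U₁ ≤ U₁
  inv2 : Submodule.map T U₂ ≤ U₂

attribute [instance] SystemS.acg SystemS.mod SystemS.fd

namespace SystemS

variable {k : Type u} [Field k] {n : ℕ}

/-- `f` is an endomorphism of the system `M`: it commutes with the operator and
preserves both invariant subspaces. -/
def IsEndo (M : SystemS k n) (f : M.V →ₗ[k] M.V) : Prop :=
  f ∘ₗ M.T = M.T ∘ₗ f ∧ Submodule.map f M.U₁ ≤ M.U₁ ∧ Submodule.map f M.U₂ ≤ M.U₂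

/-- A system is indecomposable if `V ≠ 0` and its only idempotent endomorphisms
are `0` and the identity. -/
def Indecomposable (M : SystemS k n) : Prop :=
  Nontrivial M.V ∧
    ∀ f : M.V →ₗ[k] M.V, M.IsEndo f → f ∘ₗ f = f → f = 0 ∨ f = LinearMap.id

/-- The dimension type `(dim U₁, dim U₂/U₁, dim V/U₂)` of a system. -/
noncomputable def dimType (M : SystemS k n) : ℕ × ℕ × ℕ :=
  (Module.finrank k M.U₁,
   Module.finrank k (M.U₂ ⧸ Submodule.comap M.U₂.subtype M.U₁),
   Module.finrank k (M.V ⧸ M.U₂))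

/-- Two systems are isomorphic if there is a `k`-linear equivalence of the ambient
spaces commuting with the operators and identifying the respective subspaces. -/
def Iso (M N : SystemS k n) : Prop :=
  ∃ f : M.V ≃ₗ[k] N.V,
    (f : M.V →ₗ[k] N.V) ∘ₗ M.T = N.T ∘ₗ (f : M.V →ₗ[k] N.V) ∧
    Submodule.map (f : M.V →ₗ[k] N.V) M.U₁ = N.U₁ ∧
    Submodule.map (f : M.V →ₗ[k] N.V) M.U₂ = N.U₂

end SystemS

/-- `d` is the dimension type of an indecomposable system in `S(n)`. -/
def IsIndecDimType (k : Type u) [Field k] (n : ℕ) (d : ℕ × ℕ × ℕ) : Prop :=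
  ∃ M : SystemS k n, M.Indecomposable ∧ M.dimType = d

/-!
The duality `V ↦ Dual k V`, `T ↦ T.dualMap`, `(U₁, U₂) ↦ (U₂^⊥, U₁^⊥)` maps `S(n)` to itself and
reverses dimension types, since `dim W^⊥ = dim V - dim W`. Every endomorphism of `Dual k V` is the
transpose `g.dualMap` of an endomorphism `g` of `V`, and `g.dualMap` is an idempotent endomorphism
of the dual system iff `g` is one of the original system, so indecomposability is preserved.
-/

open Module

namespace LinearMap

variable {R M N : Type*} [CommSemiring R] [AddCommMonoid M] [Module R M] [AddCommMonoid N]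
  [Module R N]

theorem dualMap_pow (f : Module.End R M) (m : ℕ) : (f ^ m).dualMap = f.dualMap ^ m := by
  induction m with
  | zero => rfl
  | succ m ih => rw [pow_succ, Module.End.mul_eq_comp, ← dualMap_comp_dualMap, ih, pow_succ']; rfl

theorem dualMap_inj [IsReflexive R N] {f g : M →ₗ[R] N} : f.dualMap = g.dualMap ↔ f = g := by
  refine ⟨fun h ↦ ext fun x ↦ (bijective_dual_eval R N).injective ?_, congrArg dualMap⟩
  ext φ
  exact LinearMap.congr_fun (LinearMap.congr_fun h φ) x

theorem exists_dualMap_eq [IsReflexive R M] (f : Dual R M →ₗ[R] Dual R N) :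
    ∃ g : N →ₗ[R] M, g.dualMap = f :=
  ⟨(evalEquiv R M).symm.toLinearMap ∘ₗ f.dualMap ∘ₗ Dual.eval R N, by ext; simp⟩

end LinearMap

namespace Subspace

variable {K V₁ V₂ : Type*} [Field K] [AddCommGroup V₁] [Module K V₁] [AddCommGroup V₂]
  [Module K V₂]

theorem map_dualMap_dualAnnihilator_le_iff {f : V₁ →ₗ[K] V₂} {W₁ : Subspace K V₁}
    {W₂ : Subspace K V₂} :
    W₂.dualAnnihilator.map f.dualMap ≤ W₁.dualAnnihilator ↔ W₁.map f ≤ W₂ := by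
  constructor
  · rintro h _ ⟨w, hw, rfl⟩
    rw [← forall_mem_dualAnnihilator_apply_eq_zero_iff]
    exact fun φ hφ ↦ (Submodule.mem_dualAnnihilator _).mp (h ⟨φ, hφ, rfl⟩) w hw
  · rintro h _ ⟨φ, hφ, rfl⟩
    exact (Submodule.mem_dualAnnihilator _).mpr fun w hw ↦
      (Submodule.mem_dualAnnihilator _).mp hφ _ (h ⟨w, hw, rfl⟩)

end Subspace

theorem Submodule.finrank_quotient_comap_subtype_add_finrank {K V : Type*} [Field K]
    [AddCommGroup V] [Module K V] [FiniteDimensional K V] {W₁ W₂ : Submodule K V} (h : W₁ ≤ W₂) :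
    finrank K (W₂ ⧸ W₁.comap W₂.subtype) + finrank K W₁ = finrank K W₂ := by
  rw [← (comapSubtypeEquivOfLe h).finrank_eq, finrank_quotient_add_finrank]

namespace SystemS

variable {k : Type u} [Field k] {n : ℕ}

noncomputable def dual (M : SystemS k n) : SystemS k n where
  V := Dual k M.V
  T := M.T.dualMap
  nilpotent := by rw [← LinearMap.dualMap_pow, M.nilpotent]; ext; simp
  U₁ := M.U₂.dualAnnihilator
  U₂ := M.U₁.dualAnnihilator
  le12 := Submodule.dualAnnihilator_anti M.le12
  inv1 := Subspace.map_dualMap_dualAnnihilator_le_iff.mpr M.inv2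
  inv2 := Subspace.map_dualMap_dualAnnihilator_le_iff.mpr M.inv1

theorem isEndo_dual_dualMap_iff (M : SystemS k n) {g : M.V →ₗ[k] M.V} :
    M.dual.IsEndo g.dualMap ↔ M.IsEndo g :=
  and_congr ((LinearMap.dualMap_inj (f := M.T ∘ₗ g) (g := g ∘ₗ M.T)).trans eq_comm)
    (and_comm.trans (and_congr Subspace.map_dualMap_dualAnnihilator_le_iff
      Subspace.map_dualMap_dualAnnihilator_le_iff))

theorem Indecomposable.dual {M : SystemS k n} (hM : M.Indecomposable) :
    M.dual.Indecomposable := by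
  have := hM.1
  refine ⟨inferInstanceAs (Nontrivial (Dual k M.V)), fun f hf hff ↦ ?_⟩
  obtain ⟨g, rfl⟩ := LinearMap.exists_dualMap_eq f
  have hgg : g ∘ₗ g = g := by rwa [← LinearMap.dualMap_inj, ← LinearMap.dualMap_comp_dualMap]
  rcases hM.2 g (M.isEndo_dual_dualMap_iff.mp hf) hgg with rfl | rfl
  · exact Or.inl (map_zero (Dual.transpose (R := k)))
  · exact Or.inr LinearMap.dualMap_id

theorem dimType_eq_finrank (M : SystemS k n) :
    M.dimType =
      (finrank k M.U₁, finrank k M.U₂ - finrank k M.U₁, finrank k M.V - finrank k M.U₂) := by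
  have h₁₂ := Submodule.finrank_quotient_comap_subtype_add_finrank M.le12
  have h₂ := M.U₂.finrank_quotient_add_finrank
  refine Prod.ext rfl (Prod.ext ?_ ?_) <;> dsimp only [dimType] <;> omega

theorem dimType_dual (M : SystemS k n) :
    M.dual.dimType = (M.dimType.2.2, M.dimType.2.1, M.dimType.1) := by
  have h₁₂ := Submodule.finrank_mono M.le12
  have h₂ := Submodule.finrank_le M.U₂
  have h₁' : finrank k M.U₁ + finrank k M.dual.U₂ = finrank k M.V :=
    Subspace.finrank_add_finrank_dualAnnihilator_eq M.U₁
  have h₂' : finrank k M.U₂ + finrank k M.dual.U₁ = finrank k M.V :=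
    Subspace.finrank_add_finrank_dualAnnihilator_eq M.U₂
  have hV : finrank k M.dual.V = finrank k M.V := Subspace.dual_finrank_eq
  rw [dimType_eq_finrank, dimType_eq_finrank]
  dsimp only
  rw [Prod.mk.injEq, Prod.mk.injEq]
  omega

end SystemS

theorem IsIndecDimType.reverse {k : Type u} [Field k] {n x y z : ℕ}
    (h : IsIndecDimType k n (x, y, z)) : IsIndecDimType k n (z, y, x) := by
  obtain ⟨M, hM, hd⟩ := h
  exact ⟨M.dual, hM.dual, by rw [M.dimType_dual, hd]⟩

/-- For every `n`, a triple `(x,y,z)` is the dimension type of an indecomposable system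
in `S(n)` iff the reversed triple `(z,y,x)` is. -/
theorem dimType_reflection (k : Type u) [Field k] (n x y z : ℕ) :
    IsIndecDimType k n (x, y, z) ↔ IsIndecDimType k n (z, y, x) :=
  ⟨IsIndecDimType.reverse, IsIndecDimType.reverse⟩
end

section
/- Let k be a field. Neither (2,1,2) nor (1,2,1) is the dimension type of an indecomposable system in S(3). -/
universe u

/-!
An idempotent endomorphism of a system whose image is a proper nonzero subspace decomposes it.
Such idempotents come from cyclic subspaces `k[T]x`: if `T^m x = 0`, `φ` is a functional with
`φ (T^j x) = δ_{j, m-1}` for `j < m` that vanishes on `T^m V`, then `v ↦ ∑ φ (T^(m-1-j) v) • T^j x`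
is idempotent and commutes with `T`, and it preserves `U_i` as soon as `T^(a_i) x ∈ U_i` and
`φ ∘ T^(m-a_i)` vanishes on `U_i`. Hence in an indecomposable system `T^(m-1) x` lies in every
subspace containing `x, …, T^(m-2) x`, `T^m V` and the `T^(m-a_i) U_i`.

In `S(3)`, `T` is nilpotent on `U₁`, `U₂/U₁` and `V/U₂`, so `T^d` maps each step of the flag
into the previous one, `d` being its dimension. With `m = 1` the criterion gives
`U₁ ∩ ker T ⊆ TV`, `U₂ ∩ ker T ⊆ TV + U₁` and `ker T ⊆ TV + U₂`. The remaining tool is a rank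
count: `dim T²U + 2 dim (U ∩ ker T) = dim U` for invariant `U` with `U ∩ ker T ⊆ TU`.

For `(1,2,1)` these inclusions give `ker T ⊆ TV`, hence `T² = 0`, and the criterion with `m = 2`
is violated at a preimage under `T` of a generator of `U₁`, whether or not it lies in `U₂`.
For `(2,1,2)`, if `Tx ∉ U₂` then the criterion with `m = 2` (at `x` corrected by an element of
`U₂`) and with `m = 3` puts `T²x` into `TU₂` but not into `T²U₂`, which the rank count on `U₂`
excludes. So `TV ⊆ U₂`, then `TV = U₂`, and the criterion with `m = 2` is violated at any vector of
`ker T² \ U₂`.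
-/

open Module Submodule

lemma LinearMap.finrank_map_add_finrank_inf_ker {k V W : Type*} [Field k] [AddCommGroup V]
    [Module k V] [FiniteDimensional k V] [AddCommGroup W] [Module k W] (f : V →ₗ[k] W)
    (p : Submodule k V) : finrank k (p.map f) + finrank k ↥(p ⊓ ker f) = finrank k p := by
  rw [← range_domRestrict, ← (f.domRestrict p).finrank_range_add_finrank_ker, ker_domRestrict]
  have h : (p ⊓ ker f).comap p.subtype = (ker f).comap p.subtype := by
    ext v
    simp
  rw [← h, (comapSubtypeEquivOfLe inf_le_left).finrank_eq]

lemma Submodule.inf_sup_span_singleton_eq {k V : Type*} [Field k] [AddCommGroup V] [Module k V]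
    {A B : Submodule k V} {y : V} (hAB : A ≤ B) (hy : y ∉ B) : B ⊓ (A ⊔ span k {y}) = A := by
  have hy0 : y ≠ 0 := by
    rintro rfl
    exact hy B.zero_mem
  rw [inf_comm, sup_inf_assoc_of_le _ hAB, inf_comm, ((disjoint_span_singleton' hy0).2 hy).eq_bot,
    sup_bot_eq]

namespace Module.End

section CyclicProjection

variable {k V : Type*} [Field k] [AddCommGroup V] [Module k V]

/-- The projection onto `k[T]x` along `{v | ∀ j < m, φ (T^j v) = 0}` when
`φ (T^j x) = δ_{j, m-1}` for `j < m`. -/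
def cyclicProjection (T : End k V) (φ : Dual k V) (x : V) (m : ℕ) : End k V :=
  ∑ j ∈ Finset.range m, (φ ∘ₗ T ^ (m - 1 - j)).smulRight ((T ^ j) x)

variable {T : End k V} {φ : Dual k V} {x : V} {m : ℕ}

lemma cyclicProjection_apply (v : V) :
    T.cyclicProjection φ x m v = ∑ j ∈ Finset.range m, φ ((T ^ (m - 1 - j)) v) • (T ^ j) x := by
  simp [cyclicProjection]

lemma cyclicProjection_pow_apply (hx : (T ^ m) x = 0)
    (hφ : ∀ j < m, φ ((T ^ j) x) = if j = m - 1 then 1 else 0) {i : ℕ} (hi : i < m) :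
    T.cyclicProjection φ x m ((T ^ i) x) = (T ^ i) x := by
  rw [cyclicProjection_apply, Finset.sum_eq_single i]
  · rw [← mul_apply, ← pow_add, hφ _ (by omega), if_pos (by omega), one_smul]
  · intro j hj hji
    have := Finset.mem_range.1 hj
    rw [← mul_apply, ← pow_add]
    rcases lt_or_gt_of_ne hji with hlt | hgt
    · rw [show m - 1 - j + i = (m - 1 - j + i - m) + m by omega, pow_add, mul_apply,
        hx, map_zero, map_zero, zero_smul]
    · rw [hφ _ (by omega), if_neg (by omega), zero_smul]
  · intro hi'
    exact absurd (Finset.mem_range.2 hi) hi'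

lemma cyclicProjection_comp_self (hx : (T ^ m) x = 0)
    (hφ : ∀ j < m, φ ((T ^ j) x) = if j = m - 1 then 1 else 0) :
    T.cyclicProjection φ x m ∘ₗ T.cyclicProjection φ x m = T.cyclicProjection φ x m := by
  ext v
  rw [LinearMap.comp_apply, cyclicProjection_apply v, map_sum]
  refine Finset.sum_congr rfl fun j hj => ?_
  rw [map_smul, cyclicProjection_pow_apply hx hφ (Finset.mem_range.1 hj)]

lemma cyclicProjection_comp_comm (hx : (T ^ m) x = 0) (hφT : ∀ v, φ ((T ^ m) v) = 0) :
    T.cyclicProjection φ x m ∘ₗ T = T ∘ₗ T.cyclicProjection φ x m := by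
  ext v
  simp only [LinearMap.comp_apply, cyclicProjection_apply, map_sum, map_smul]
  cases m with
  | zero => simp
  | succ n =>
    rw [Finset.sum_range_succ', Finset.sum_range_succ]
    simp only [← mul_apply, ← pow_succ, ← pow_succ']
    rw [Nat.add_sub_cancel, Nat.sub_zero, hx, hφT, zero_smul, smul_zero, add_zero, add_zero]
    refine Finset.sum_congr rfl fun j hj => ?_
    rw [show n - (j + 1) + 1 = n - j by have := Finset.mem_range.1 hj; omega]

lemma map_cyclicProjection_le {U : Submodule k V} (hU : U ≤ U.comap T) {a : ℕ} (ha : a ≤ m)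
    (hxU : (T ^ a) x ∈ U) (hφU : ∀ v ∈ U, φ ((T ^ (m - a)) v) = 0) :
    U.map (T.cyclicProjection φ x m) ≤ U := by
  rintro _ ⟨v, hv, rfl⟩
  rw [cyclicProjection_apply]
  refine Submodule.sum_mem _ fun j _ => ?_
  by_cases hj : a ≤ j
  · rw [show j = (j - a) + a by omega, pow_add, mul_apply]
    exact U.smul_mem _ (U.le_comap_pow_of_le_comap hU _ hxU)
  · rw [show m - 1 - j = (m - a) + (a - 1 - j) by omega, pow_add, mul_apply,
      hφU _ (U.le_comap_pow_of_le_comap hU _ hv), zero_smul]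
    exact U.zero_mem

lemma range_cyclicProjection_le :
    LinearMap.range (T.cyclicProjection φ x m) ≤
      span k (Set.range fun j : Fin m => (T ^ (j : ℕ)) x) := by
  rintro _ ⟨v, rfl⟩
  rw [cyclicProjection_apply,
    ← Fin.sum_univ_eq_sum_range fun j => φ ((T ^ (m - 1 - j)) v) • (T ^ j) x]
  exact Submodule.sum_mem _ fun j _ => Submodule.smul_mem _ _ (subset_span ⟨j, rfl⟩)

end CyclicProjection

section Span

variable {k V : Type*} [Field k] [AddCommGroup V] [Module k V] {T : End k V}
  {P : Submodule k V} {x : V}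

lemma apply_mem_of_mem_span_singleton_sup (hP : P ≤ P.comap T) (hx : T (T x) = 0)
    (h : T x ∈ span k {x} ⊔ P) : T x ∈ P := by
  obtain ⟨_, hc, p, hp, hcp⟩ := mem_sup.1 h
  obtain ⟨c, rfl⟩ := mem_span_singleton.1 hc
  have hTcp : c • T x = -T p := by
    have := congr(T $hcp)
    rw [map_add, map_smul, hx] at this
    exact eq_neg_of_add_eq_zero_left this
  by_cases hc0 : c = 0
  · rw [← hcp, hc0, zero_smul, zero_add]
    exact hp
  · rw [← inv_smul_smul₀ hc0 (T x), hTcp]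
    exact P.smul_mem _ (P.neg_mem (hP hp))

lemma apply_apply_mem_of_mem_span_pair_sup (hP : P ≤ P.comap T) (hx : T (T (T x)) = 0)
    (h : T (T x) ∈ span k {x, T x} ⊔ P) : T (T x) ∈ P := by
  obtain ⟨_, hab, p, hp, habp⟩ := mem_sup.1 h
  obtain ⟨a, b, rfl⟩ := mem_span_pair.1 hab
  by_cases ha0 : a = 0
  · refine apply_mem_of_mem_span_singleton_sup hP hx (mem_sup.2 ⟨b • T x, ?_, p, hp, ?_⟩)
    · exact smul_mem _ _ (mem_span_singleton_self _)
    · simpa [ha0] using habp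
  · have hTTap : a • T (T x) = -T (T p) := by
      have := congr(T (T $habp))
      simp only [map_add, map_smul, hx, smul_zero, add_zero] at this
      exact eq_neg_of_add_eq_zero_left (by simpa [hx] using this)
    rw [← inv_smul_smul₀ ha0 (T (T x)), hTTap]
    exact P.smul_mem _ (P.neg_mem (hP (hP hp)))

end Span

section Finrank

variable {k V : Type*} [Field k] [AddCommGroup V] [Module k V] [FiniteDimensional k V]
  {T : End k V}

lemma pow_finrank_eq_zero_of_isNilpotent (hT : IsNilpotent T) : T ^ finrank k V = 0 := by
  simpa [hT.charpoly_eq_X_pow_finrank] using T.aeval_self_charpoly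

lemma pow_finrank_quotient_apply_mem (hT : IsNilpotent T) {p : Submodule k V}
    (hp : p ≤ p.comap T) (v : V) : (T ^ finrank k (V ⧸ p)) v ∈ p := by
  have h := congr($(pow_finrank_eq_zero_of_isNilpotent (IsNilpotent.mapQ hp hT)) (p.mkQ v))
  rwa [mkQ_apply, ← p.mapQ_pow hp, mapQ_apply, LinearMap.zero_apply,
    Submodule.Quotient.mk_eq_zero] at h

lemma finrank_map_sq_add_two_mul_finrank_inf_ker {U : Submodule k V} (hU : U.map T ≤ U)
    (hker : U ⊓ LinearMap.ker T ≤ U.map T) :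
    finrank k (U.map (T ^ 2)) + 2 * finrank k ↥(U ⊓ LinearMap.ker T) = finrank k U := by
  have h₁ := LinearMap.finrank_map_add_finrank_inf_ker T U
  have h₂ := LinearMap.finrank_map_add_finrank_inf_ker T (U.map T)
  have hinf : U.map T ⊓ LinearMap.ker T = U ⊓ LinearMap.ker T :=
    le_antisymm (inf_le_inf_right _ hU) (le_inf hker inf_le_right)
  rw [hinf, ← Submodule.map_comp] at h₂
  rw [pow_two, mul_eq_comp]
  omega

lemma sq_eq_zero_of_ker_le_range (hT : T ^ 3 = 0) (hV : finrank k V = 4)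
    (h : LinearMap.ker T ≤ LinearMap.range T) : T ^ 2 = 0 := by
  have key := finrank_map_sq_add_two_mul_finrank_inf_ker (T := T) (U := ⊤) (by simp)
    (by simpa using h)
  have hle : LinearMap.range (T ^ 2) ≤ LinearMap.ker T := by
    rintro _ ⟨v, rfl⟩
    rw [LinearMap.mem_ker, ← mul_apply, ← pow_succ', hT, LinearMap.zero_apply]
  have := Submodule.finrank_mono hle
  rw [Submodule.map_top, top_inf_eq, finrank_top] at key
  rw [← LinearMap.range_eq_bot, ← Submodule.finrank_eq_zero]
  omega

lemma inf_ker_le_map_sq (hT : T ^ 3 = 0) {U : Submodule k V} (hU3 : finrank k U = 3)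
    (hU : U.map T ≤ U) (hker : U ⊓ LinearMap.ker T ≤ U.map T) :
    U ⊓ LinearMap.ker T ≤ U.map (T ^ 2) := by
  have key := finrank_map_sq_add_two_mul_finrank_inf_ker hU hker
  have hle : U.map (T ^ 2) ≤ U ⊓ LinearMap.ker T := by
    rintro _ ⟨v, hv, rfl⟩
    refine mem_inf.2 ⟨?_, ?_⟩
    · rw [sq, mul_apply]
      exact hU ⟨_, hU ⟨v, hv, rfl⟩, rfl⟩
    · rw [LinearMap.mem_ker, ← mul_apply, ← pow_succ', hT, LinearMap.zero_apply]
  have := Submodule.finrank_mono hle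
  exact (Submodule.eq_of_le_of_finrank_eq hle (by omega)).ge

end Finrank

end Module.End

namespace SystemS

section General

variable {k : Type u} [Field k] {n : ℕ} {M : SystemS k n}

lemma U₁_le_comap : M.U₁ ≤ M.U₁.comap M.T := map_le_iff_le_comap.1 M.inv1

lemma U₂_le_comap : M.U₂ ≤ M.U₂.comap M.T := map_le_iff_le_comap.1 M.inv2

lemma map_U₂_le_comap : M.U₂.map M.T ≤ (M.U₂.map M.T).comap M.T :=
  map_le_iff_le_comap.1 (map_mono M.inv2)

lemma isNilpotent_T : IsNilpotent M.T := ⟨n, M.nilpotent⟩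

lemma finrank_eq_of_dimType {a b c : ℕ} (hd : M.dimType = (a, b, c)) :
    finrank k M.U₁ = a ∧ finrank k M.U₂ = a + b ∧ finrank k M.V = a + b + c := by
  simp only [dimType, Prod.mk.injEq] at hd
  obtain ⟨h₁, h₂, h₃⟩ := hd
  have e₁ := (comapSubtypeEquivOfLe M.le12).finrank_eq
  have e₂ := (M.U₁.comap M.U₂.subtype).finrank_quotient_add_finrank
  have e₃ := M.U₂.finrank_quotient_add_finrank
  refine ⟨h₁, ?_, ?_⟩ <;> omega

lemma pow_dimType_fst_apply_eq_zero {u : M.V} (hu : u ∈ M.U₁) :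
    (M.T ^ M.dimType.1) u = 0 := by
  have h := congr($(End.pow_finrank_eq_zero_of_isNilpotent
    (End.isNilpotent.restrict U₁_le_comap M.isNilpotent_T)) ⟨u, hu⟩)
  rw [End.pow_restrict, LinearMap.restrict_apply, LinearMap.zero_apply] at h
  exact congr(Subtype.val $h)

lemma pow_dimType_snd_fst_apply_mem {s : M.V} (hs : s ∈ M.U₂) :
    (M.T ^ M.dimType.2.1) s ∈ M.U₁ := by
  have hp : M.U₁.comap M.U₂.subtype ≤
      (M.U₁.comap M.U₂.subtype).comap (M.T.restrict U₂_le_comap) :=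
    fun _ hv => U₁_le_comap hv
  have h := End.pow_finrank_quotient_apply_mem
    (End.isNilpotent.restrict U₂_le_comap M.isNilpotent_T) hp ⟨s, hs⟩
  rwa [End.pow_restrict, mem_comap, LinearMap.restrict_apply] at h

lemma pow_dimType_snd_snd_apply_mem (v : M.V) : (M.T ^ M.dimType.2.2) v ∈ M.U₂ :=
  End.pow_finrank_quotient_apply_mem M.isNilpotent_T U₂_le_comap v

/-- Otherwise a functional separating `T^(m-1) x` from `W` turns `cyclicProjection` into an
idempotent endomorphism of `M` other than `0` and `id`. -/
theorem Indecomposable.pow_pred_apply_mem (hM : M.Indecomposable) {x : M.V} {m : ℕ}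
    {W : Submodule k M.V} (hm : 0 < m) (hmV : m < finrank k M.V) (hx : (M.T ^ m) x = 0)
    (hxW : ∀ j < m - 1, (M.T ^ j) x ∈ W) (hTW : LinearMap.range (M.T ^ m) ≤ W)
    {a₁ a₂ : ℕ} (ha₁ : a₁ ≤ m) (hx₁ : (M.T ^ a₁) x ∈ M.U₁) (hW₁ : M.U₁.map (M.T ^ (m - a₁)) ≤ W)
    (ha₂ : a₂ ≤ m) (hx₂ : (M.T ^ a₂) x ∈ M.U₂) (hW₂ : M.U₂.map (M.T ^ (m - a₂)) ≤ W) :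
    (M.T ^ (m - 1)) x ∈ W := by
  by_contra hxW'
  obtain ⟨ψ, hψx, hWψ⟩ := W.exists_le_ker_of_notMem hxW'
  set φ := (ψ ((M.T ^ (m - 1)) x))⁻¹ • ψ
  have hφW : ∀ w ∈ W, φ w = 0 := fun w hw => by simp [φ, LinearMap.mem_ker.1 (hWψ hw)]
  have hφ : ∀ j < m, φ ((M.T ^ j) x) = if j = m - 1 then 1 else 0 := by
    intro j hj
    split_ifs with h
    · subst h
      simp [φ, hψx]
    · exact hφW _ (hxW j (by omega))
  have hf := hM.2 (End.cyclicProjection M.T φ x m)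
    ⟨End.cyclicProjection_comp_comm hx fun v => hφW _ (hTW ⟨v, rfl⟩),
      End.map_cyclicProjection_le U₁_le_comap ha₁ hx₁ fun v hv => hφW _ (hW₁ ⟨v, hv, rfl⟩),
      End.map_cyclicProjection_le U₂_le_comap ha₂ hx₂ fun v hv => hφW _ (hW₂ ⟨v, hv, rfl⟩)⟩
    (End.cyclicProjection_comp_self hx hφ)
  rcases hf with h0 | hid
  · have hx0 : x ≠ 0 := by
      rintro rfl
      simpa using hφ (m - 1) (by omega)
    have h := End.cyclicProjection_pow_apply hx hφ hm
    rw [h0, pow_zero, LinearMap.zero_apply] at h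
    exact hx0 (by simpa using h.symm)
  · have h := Submodule.finrank_mono
      (End.range_cyclicProjection_le (T := M.T) (φ := φ) (x := x) (m := m))
    rw [hid, LinearMap.range_id, finrank_top] at h
    have := finrank_range_le_card (R := k) fun j : Fin m => (M.T ^ (j : ℕ)) x
    simp only [Set.finrank, Fintype.card_fin] at this
    omega

theorem Indecomposable.U₁_inf_ker_le_range (hM : M.Indecomposable) (hV : 1 < finrank k M.V) :
    M.U₁ ⊓ LinearMap.ker M.T ≤ LinearMap.range M.T := by
  rintro z ⟨hz₁, hz⟩
  simpa using hM.pow_pred_apply_mem (m := 1) (W := LinearMap.range M.T) (a₁ := 0) (a₂ := 0)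
    one_pos hV (by simpa using hz) (by simp) (by simp) (by simp) (by simpa using hz₁)
    (by simpa using LinearMap.map_le_range) (by simp) (by simpa using M.le12 hz₁)
    (by simpa using LinearMap.map_le_range)

theorem Indecomposable.U₂_inf_ker_le_range_sup_U₁ (hM : M.Indecomposable)
    (hV : 1 < finrank k M.V) : M.U₂ ⊓ LinearMap.ker M.T ≤ LinearMap.range M.T ⊔ M.U₁ := by
  rintro z ⟨hz₂, hz⟩
  simpa using hM.pow_pred_apply_mem (m := 1) (W := LinearMap.range M.T ⊔ M.U₁) (a₁ := 1)
    (a₂ := 0) one_pos hV (by simpa using hz) (by simp) (by simp) (by simp) (by simp_all)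
    (by simp [End.one_eq_id]) (by simp) (by simpa using hz₂)
    (by simpa using le_sup_of_le_left (LinearMap.map_le_range (f := M.T)))

theorem Indecomposable.ker_le_range_sup_U₂ (hM : M.Indecomposable) (hV : 1 < finrank k M.V) :
    LinearMap.ker M.T ≤ LinearMap.range M.T ⊔ M.U₂ := by
  intro z hz
  simpa using hM.pow_pred_apply_mem (m := 1) (W := LinearMap.range M.T ⊔ M.U₂) (a₁ := 1)
    (a₂ := 1) one_pos hV (by simpa using hz) (by simp) (by simp) (by simp) (by simp_all)
    (by simpa [End.one_eq_id] using le_sup_of_le_right M.le12) (by simp) (by simp_all)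
    (by simp [End.one_eq_id])

theorem Indecomposable.apply_mem_of_apply_apply_eq_zero (hM : M.Indecomposable)
    (hV : 2 < finrank k M.V) {x : M.V} (hx : M.T (M.T x) = 0) {P : Submodule k M.V}
    (hP : P ≤ P.comap M.T) (hTP : LinearMap.range (M.T ^ 2) ≤ P) {a₁ a₂ : ℕ} (ha₁ : a₁ ≤ 2)
    (hx₁ : (M.T ^ a₁) x ∈ M.U₁) (hP₁ : M.U₁.map (M.T ^ (2 - a₁)) ≤ P) (ha₂ : a₂ ≤ 2)
    (hx₂ : (M.T ^ a₂) x ∈ M.U₂) (hP₂ : M.U₂.map (M.T ^ (2 - a₂)) ≤ P) : M.T x ∈ P :=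
  End.apply_mem_of_mem_span_singleton_sup hP hx <| by
    simpa using hM.pow_pred_apply_mem (m := 2) (W := span k {x} ⊔ P) two_pos hV
      (by simp [sq, hx]) (by simp [mem_sup_left]) (hTP.trans le_sup_right) ha₁ hx₁
      (hP₁.trans le_sup_right) ha₂ hx₂ (hP₂.trans le_sup_right)

theorem Indecomposable.apply_apply_mem_of_pow_three_eq_zero (hM : M.Indecomposable)
    (hV : 3 < finrank k M.V) (hT : M.T ^ 3 = 0) {x : M.V} {P : Submodule k M.V}
    (hP : P ≤ P.comap M.T) {a₁ a₂ : ℕ} (ha₁ : a₁ ≤ 3) (hx₁ : (M.T ^ a₁) x ∈ M.U₁)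
    (hP₁ : M.U₁.map (M.T ^ (3 - a₁)) ≤ P) (ha₂ : a₂ ≤ 3) (hx₂ : (M.T ^ a₂) x ∈ M.U₂)
    (hP₂ : M.U₂.map (M.T ^ (3 - a₂)) ≤ P) : M.T (M.T x) ∈ P := by
  have hx : M.T (M.T (M.T x)) = 0 := by simpa [pow_succ] using congr($hT x)
  refine End.apply_apply_mem_of_mem_span_pair_sup hP hx ?_
  have hxW : ∀ j < 2, (M.T ^ j) x ∈ span k {x, M.T x} ⊔ P := fun j hj =>
    mem_sup_left (subset_span (by interval_cases j <;> simp))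
  simpa [pow_succ] using hM.pow_pred_apply_mem (m := 3) (W := span k {x, M.T x} ⊔ P) three_pos
    hV (by simp [pow_succ, hx]) hxW (by simp [hT]) ha₁ hx₁ (hP₁.trans le_sup_right) ha₂ hx₂
    (hP₂.trans le_sup_right)

end General

variable {k : Type u} [Field k] {M : SystemS k 3}

theorem not_indecomposable_of_dimType_121 (hd : M.dimType = (1, 2, 1)) : ¬ M.Indecomposable := by
  intro hM
  obtain ⟨h₁, -, hV⟩ := M.finrank_eq_of_dimType hd
  have hTU₁ : ∀ u ∈ M.U₁, M.T u = 0 := fun u hu => by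
    simpa [hd] using pow_dimType_fst_apply_eq_zero hu
  have hTV : LinearMap.range M.T ≤ M.U₂ := by
    rintro _ ⟨v, rfl⟩
    simpa [hd] using M.pow_dimType_snd_snd_apply_mem v
  have hK : LinearMap.ker M.T ≤ M.U₂ :=
    (hM.ker_le_range_sup_U₂ (by omega)).trans (sup_le hTV le_rfl)
  have hU₁ : M.U₁ ≤ LinearMap.range M.T := fun u hu =>
    hM.U₁_inf_ker_le_range (by omega) ⟨hu, hTU₁ u hu⟩
  have hT2 : M.T ^ 2 = 0 := End.sq_eq_zero_of_ker_le_range M.nilpotent (by omega) fun z hz =>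
    sup_le le_rfl hU₁ (hM.U₂_inf_ker_le_range_sup_U₁ (by omega) ⟨hK hz, hz⟩)
  obtain ⟨u, hu, hu0⟩ := M.U₁.exists_mem_ne_zero_of_ne_bot (by
    rintro h
    rw [h, finrank_bot] at h₁
    omega)
  obtain ⟨y, rfl⟩ := hU₁ hu
  have hTTy : M.T (M.T y) = 0 := hTU₁ _ hu
  by_cases hy : y ∈ M.U₂
  · refine hu0 (mem_bot k |>.1 <| hM.apply_mem_of_apply_apply_eq_zero (a₁ := 1) (a₂ := 0)
      (by omega) hTTy bot_le (by simp [hT2]) (by simp) (by simpa using hu) ?_ (by simp)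
      (by simpa using hy) (by simp [hT2]))
    rintro _ ⟨v, hv, rfl⟩
    simp [hTU₁ v hv]
  · obtain ⟨s, hs, hTs⟩ := hM.apply_mem_of_apply_apply_eq_zero (a₁ := 1) (a₂ := 1) (by omega)
      hTTy map_U₂_le_comap (by simp [hT2]) (by simp) (by simpa using hu)
      (by simpa using map_mono M.le12) (by simp) (by simpa using M.le12 hu) (by simp)
    exact hy (by simpa using M.U₂.add_mem (hK (by simp [hTs] : y - s ∈ LinearMap.ker M.T)) hs)

theorem Indecomposable.apply_apply_mem_map_sq (hM : M.Indecomposable)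
    (h₂ : finrank k M.U₂ = 3) (hV : finrank k M.V = 5) (hTU₂ : M.U₂.map M.T ≤ M.U₁) {x : M.V}
    (hx : M.T x ∉ M.U₂) (hTTx : M.T (M.T x) ∈ M.U₂.map M.T) :
    M.T (M.T x) ∈ M.U₂.map (M.T ^ 2) := by
  have hTTx₂ : M.T (M.T x) ∈ M.U₂ := M.inv2 hTTx
  have hx' : x ∉ M.U₂ ⊔ span k {M.T x} := by
    intro h
    obtain ⟨s, hs, _, hc, hsc⟩ := mem_sup.1 h
    obtain ⟨c, rfl⟩ := mem_span_singleton.1 hc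
    have hTsc := congr(M.T $hsc)
    rw [map_add, map_smul] at hTsc
    exact hx (hTsc ▸ M.U₂.add_mem (M.inv2 ⟨s, hs, rfl⟩) (M.U₂.smul_mem c hTTx₂))
  have htop : M.U₂ ⊔ span k {x, M.T x} = ⊤ := by
    refine eq_top_of_finrank_eq ?_
    rw [span_insert, sup_comm (span k {x}), ← sup_assoc, finrank_sup_span_singleton hx',
      finrank_sup_span_singleton hx, h₂, hV]
  have hrange : LinearMap.range M.T ≤ M.U₂.map M.T ⊔ span k {M.T x} := by
    rw [← Submodule.map_top, ← htop, Submodule.map_sup, Submodule.map_span, Set.image_pair]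
    refine sup_le le_sup_left (span_le.2 ?_)
    rintro _ (rfl | rfl)
    · exact mem_sup_right (mem_span_singleton_self _)
    · exact mem_sup_left hTTx
  have hker : M.U₂ ⊓ LinearMap.ker M.T ≤ M.U₂.map M.T := by
    intro z hz
    have hz₁ : z ∈ M.U₁ := by
      rw [← inf_sup_span_singleton_eq M.le12 hx]
      exact ⟨hz.1, sup_le (hrange.trans (sup_le_sup_right hTU₂ _)) le_sup_left
        (hM.U₂_inf_ker_le_range_sup_U₁ (by omega) hz)⟩
    rw [← inf_sup_span_singleton_eq M.inv2 hx]
    exact ⟨hz.1, hrange (hM.U₁_inf_ker_le_range (by omega) ⟨hz₁, hz.2⟩)⟩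
  refine End.inf_ker_le_map_sq M.nilpotent h₂ M.inv2 hker ⟨hTTx₂, ?_⟩
  simpa [pow_succ] using congr($M.nilpotent x)

theorem Indecomposable.range_le_U₂_of_dimType_212 (hM : M.Indecomposable)
    (hd : M.dimType = (2, 1, 2)) : LinearMap.range M.T ≤ M.U₂ := by
  obtain ⟨-, h₂, hV⟩ := M.finrank_eq_of_dimType hd
  have hTU₂ : M.U₂.map M.T ≤ M.U₁ := by
    rintro _ ⟨s, hs, rfl⟩
    simpa [hd] using pow_dimType_snd_fst_apply_mem hs
  have hTTV : ∀ v, M.T (M.T v) ∈ M.U₂ := fun v => by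
    simpa [hd, sq] using M.pow_dimType_snd_snd_apply_mem v
  rintro _ ⟨x, rfl⟩
  by_contra hx
  have hTTx : M.T (M.T x) ∉ M.U₂.map (M.T ^ 2) := by
    rintro ⟨s, hs, hsx⟩
    have hTT : M.T (M.T (x - s)) = 0 := by simpa [sq, sub_eq_zero] using hsx.symm
    have h := hM.apply_mem_of_apply_apply_eq_zero (a₁ := 2) (a₂ := 2) (by omega) hTT U₂_le_comap
      (by rintro _ ⟨v, rfl⟩; simpa [sq] using hTTV v) le_rfl
      (by rw [sq, End.mul_apply, hTT]; exact M.U₁.zero_mem) (by simpa [End.one_eq_id] using M.le12)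
      le_rfl (by rw [sq, End.mul_apply, hTT]; exact M.U₂.zero_mem) (by simp [End.one_eq_id])
    exact hx (by simpa using M.U₂.add_mem h (M.inv2 ⟨s, hs, rfl⟩))
  have hTTx₁ : M.T (M.T x) ∈ M.U₁ :=
    hM.apply_apply_mem_of_pow_three_eq_zero (a₁ := 3) (a₂ := 2) (by omega) M.nilpotent
      U₁_le_comap le_rfl (by simp [M.nilpotent]) (by simp [End.one_eq_id]) (by norm_num)
      (by simpa [sq] using hTTV x) (by simpa using hTU₂)
  have hTTx₂ : M.T (M.T x) ∈ M.U₂.map M.T :=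
    hM.apply_apply_mem_of_pow_three_eq_zero (a₁ := 2) (a₂ := 2) (by omega) M.nilpotent
      map_U₂_le_comap (by norm_num) (by simpa [sq] using hTTx₁) (by simpa using map_mono M.le12)
      (by norm_num) (by simpa [sq] using M.le12 hTTx₁) (by simp)
  exact hTTx (hM.apply_apply_mem_map_sq h₂ (by omega) hTU₂ hx hTTx₂)

theorem Indecomposable.range_eq_U₂_of_dimType_212 (hM : M.Indecomposable)
    (hd : M.dimType = (2, 1, 2)) : LinearMap.range M.T = M.U₂ := by
  obtain ⟨-, h₂, hV⟩ := M.finrank_eq_of_dimType hd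
  have hI := hM.range_le_U₂_of_dimType_212 hd
  have hK : LinearMap.ker M.T ≤ M.U₂ :=
    (hM.ker_le_range_sup_U₂ (by omega)).trans (sup_le hI le_rfl)
  have hrn := LinearMap.finrank_range_add_finrank_ker M.T
  refine eq_of_le_of_finrank_eq hI ?_
  have := finrank_mono hI
  have := finrank_mono hK
  by_contra hne
  have hKU₂ : LinearMap.ker M.T = M.U₂ := eq_of_le_of_finrank_eq hK (by omega)
  have hU₁ : M.U₁ ≤ LinearMap.range M.T := fun u hu =>
    hM.U₁_inf_ker_le_range (by omega) ⟨hu, hKU₂ ▸ M.le12 hu⟩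
  have hU₂ : M.U₂ ≤ LinearMap.range M.T := fun s hs =>
    sup_le le_rfl hU₁ (hM.U₂_inf_ker_le_range_sup_U₁ (by omega) ⟨hs, hKU₂ ▸ hs⟩)
  have := finrank_mono hU₂
  omega

theorem not_indecomposable_of_dimType_212 (hd : M.dimType = (2, 1, 2)) : ¬ M.Indecomposable := by
  intro hM
  obtain ⟨-, h₂, hV⟩ := M.finrank_eq_of_dimType hd
  have hTU₂ : M.U₂.map M.T ≤ M.U₁ := by
    rintro _ ⟨s, hs, rfl⟩
    simpa [hd] using pow_dimType_snd_fst_apply_mem hs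
  have hIU₂ := hM.range_eq_U₂_of_dimType_212 hd
  have hK : LinearMap.ker M.T ≤ M.U₂ :=
    (hM.ker_le_range_sup_U₂ (by omega)).trans (sup_le hIU₂.le le_rfl)
  have hrn := LinearMap.finrank_range_add_finrank_ker M.T
  have hr : finrank k (LinearMap.range M.T) = 3 := by rw [hIU₂, h₂]
  have key := End.finrank_map_sq_add_two_mul_finrank_inf_ker (T := M.T) (U := ⊤) (by simp)
    (by simpa [hIU₂] using hK)
  rw [Submodule.map_top, top_inf_eq, finrank_top] at key
  have hrn₂ := LinearMap.finrank_range_add_finrank_ker (M.T ^ 2)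
  obtain ⟨z, hz, hzU₂⟩ := SetLike.not_le_iff_exists.1 fun h : LinearMap.ker (M.T ^ 2) ≤ M.U₂ => by
    have := finrank_mono h
    omega
  have hTTz : M.T (M.T z) = 0 := by simpa [sq] using hz
  have hrange₂ : LinearMap.range (M.T ^ 2) = M.U₂.map M.T := by
    rw [sq, End.mul_eq_comp, LinearMap.range_comp, hIU₂]
  by_cases hTz : M.T z ∈ M.U₁
  · obtain ⟨s, hs, hTs⟩ := hM.apply_mem_of_apply_apply_eq_zero (a₁ := 1) (a₂ := 1) (by omega)
      hTTz map_U₂_le_comap hrange₂.le (by norm_num) (by simpa using hTz)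
      (by simpa using map_mono M.le12) (by norm_num) (by simp [← hIU₂]) (by simp)
    exact hzU₂ (by simpa using M.U₂.add_mem (hK (by simp [hTs] : z - s ∈ LinearMap.ker M.T)) hs)
  · exact hTz (hM.apply_mem_of_apply_apply_eq_zero (a₁ := 2) (a₂ := 1) (by omega) hTTz
      U₁_le_comap (hrange₂ ▸ hTU₂) le_rfl (by simp [sq, hTTz]) (by simp [End.one_eq_id])
      (by norm_num) (by simp [← hIU₂]) (by simpa using hTU₂))

end SystemS

/-- Neither `(2,1,2)` nor `(1,2,1)` is the dimension type of an indecomposable system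
in `S(3)`. -/
theorem no_indec_212_121_S3 (k : Type u) [Field k] :
    ¬ IsIndecDimType k 3 (2, 1, 2) ∧ ¬ IsIndecDimType k 3 (1, 2, 1) :=
  ⟨fun ⟨_, hM, hd⟩ => SystemS.not_indecomposable_of_dimType_212 hd hM,
    fun ⟨_, hM, hd⟩ => SystemS.not_indecomposable_of_dimType_121 hd hM⟩
end
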